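/- Let G be a cobipartite finite simple graph and let F ⊆ V(G) be a positive semidefinite zero forcing set for G. Then, in any forcing sequence from F under the positive semidefinite zero forcing rule, any force that is a standard force is followed only by standard forces; that is, all strictly positive semidefinite forces in the sequence occur before any of the standard forces. -/

import Mathlib

/-!  Common definitions: zero forcing (standard, loop, positive semidefinite),
zero-nonzero patterns, triangles, and related graph parameters. -/

variable {V : Type*}

/-- Standard zero forcing rule: with filled set `S`, the filled vertex `v` can force
its unique unfilled neighbor `u`. -/
def StdForce (G : SimpleGraph V) (S : Set V) (v u : V) : Prop :=
  v ∈ S ∧ u ∉ S ∧ G.Adj v u ∧ ∀ w, G.Adj v w → w ∉ S → w = u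

/-- Adjacency in the looping of `G` with loops at the vertices in `L`
(a vertex counts as its own neighbor iff it has a loop). -/
def LoopAdj (G : SimpleGraph V) (L : Set V) (v w : V) : Prop :=
  G.Adj v w ∨ (v = w ∧ v ∈ L)

/-- Loop zero forcing rule (the forcing vertex need not be filled): `v` can force `u`
if `u` is the only unfilled neighbor of `v` in the looping. -/
def LoopForce (G : SimpleGraph V) (L : Set V) (S : Set V) (v u : V) : Prop :=
  u ∉ S ∧ LoopAdj G L v u ∧ ∀ w, LoopAdj G L v w → w ∉ S → w = u

/-- Positive semidefinite zero forcing rule: the filled vertex `v` can force the unfilled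
vertex `u` if `u` is the only neighbor of `v` in the connected component of `u` of the
subgraph induced by the unfilled vertices. -/
def PsdForce (G : SimpleGraph V) (S : Set V) (v u : V) : Prop :=
  v ∈ S ∧ u ∉ S ∧ G.Adj v u ∧
    ∀ w, G.Adj v w → w ∉ S →
      Relation.ReflTransGen (fun a b => G.Adj a b ∧ a ∉ S ∧ b ∉ S) u w → w = u

/-- The vertices performing a force in a forcing sequence. -/
def sourcesOf (seq : List (V × V)) : Set V := {v | ∃ p ∈ seq, p.1 = v}

/-- The vertices that get forced in a forcing sequence. -/
def targetsOf (seq : List (V × V)) : Set V := {u | ∃ p ∈ seq, p.2 = u}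

/-- The filled set after performing all forces of `seq` starting from `F`. -/
def filledAfter (F : Set V) (seq : List (V × V)) : Set V := F ∪ targetsOf seq

/-- `ValidSeq rule seq F`: starting with `F` as the filled set, the sequence of forces
`seq` is permitted (each force in turn is allowed by `rule`, and each vertex forces
at most once). -/
def ValidSeq (rule : Set V → V → V → Prop) : List (V × V) → Set V → Prop
  | [], _ => True
  | (v, u) :: rest, F => rule F v u ∧ (∀ p ∈ rest, p.1 ≠ v) ∧ ValidSeq rule rest (insert u F)

/-- `F` is a zero forcing set w.r.t. the forcing rule `rule`. -/
def IsZFSet (rule : Set V → V → V → Prop) (F : Set V) : Prop :=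
  ∃ seq : List (V × V), ValidSeq rule seq F ∧ filledAfter F seq = Set.univ

/-- `F` is a zero forcing set (w.r.t. `rule`) from which `R` can be the set of vertices
that force: some (automatically complete) forcing sequence from `F` fills every vertex
and the set of vertices performing a force is exactly `R`. -/
def ForcesWith (rule : Set V → V → V → Prop) (F R : Set V) : Prop :=
  ∃ seq : List (V × V), ValidSeq rule seq F ∧ filledAfter F seq = Set.univ ∧
    sourcesOf seq = R

/-- The zero forcing number w.r.t. a forcing rule. -/
noncomputable def Znum (rule : Set V → V → V → Prop) : ℕ :=
  sInf {n | ∃ F : Set V, IsZFSet rule F ∧ F.ncard = n}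

/-- The (standard) zero forcing number `Z(G)`. -/
noncomputable def Z (G : SimpleGraph V) : ℕ := Znum (StdForce G)

/-- The zero forcing number of the looping of `G` with loops at `L`. -/
noncomputable def Zloop (G : SimpleGraph V) (L : Set V) : ℕ := Znum (LoopForce G L)

/-- The positive semidefinite zero forcing number `Z₊(G)`. -/
noncomputable def Zplus (G : SimpleGraph V) : ℕ := Znum (PsdForce G)

/-- The enhanced zero forcing number `Ẑ(G)`: the maximum over all loopings of `G` of the
zero forcing number of the looping. -/
noncomputable def Zhat (G : SimpleGraph V) : ℕ := sSup {n | ∃ L : Set V, Zloop G L = n}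

/-- `F` is a direct zero forcing set for `G`: some forcing sequence from `F` fills every
vertex and every vertex that performs a force belongs to `F`. -/
def IsDirectZFSet (G : SimpleGraph V) (F : Set V) : Prop :=
  ∃ seq : List (V × V), ValidSeq (StdForce G) seq F ∧ filledAfter F seq = Set.univ ∧
    sourcesOf seq ⊆ F

/-- The direct zero forcing number `Z_d(G)`. -/
noncomputable def Zd (G : SimpleGraph V) : ℕ :=
  sInf {n | ∃ F : Set V, IsDirectZFSet G F ∧ F.ncard = n}

/-- A zero-nonzero pattern `Y` (entry `Y i j` means the `(i,j)` entry is `*`)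
has a `k × k` submatrix that is a triangle. -/
def HasTriOfSize {ρ γ : Type*} (Y : ρ → γ → Prop) (k : ℕ) : Prop :=
  ∃ (r : Fin k → ρ) (c : Fin k → γ), Function.Injective r ∧ Function.Injective c ∧
    (∀ i, Y (r i) (c i)) ∧ ∀ i j : Fin k, i < j → ¬ Y (r i) (c j)

/-- The triangle number `tri(Y)` of a zero-nonzero pattern. -/
noncomputable def tri {ρ γ : Type*} (Y : ρ → γ → Prop) : ℕ := sSup {k | HasTriOfSize Y k}

/-- Membership in `S_znz(G)`: off the diagonal, the pattern matches the adjacency of `G`. -/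
def InSznz (G : SimpleGraph V) (A : V → V → Prop) : Prop :=
  ∀ i j : V, i ≠ j → (A i j ↔ G.Adj i j)

/-- The zero-nonzero pattern of the looping of `G` with loops at `L`. -/
def loopPattern (G : SimpleGraph V) (L : Set V) : V → V → Prop :=
  fun i j => (i = j ∧ i ∈ L) ∨ (i ≠ j ∧ G.Adj i j)

/-- The submatrix of the pattern `Y` with rows `R` and columns `C` is a triangle:
there are enumerations of `R` and `C` realizing a lower-triangular pattern with `*`
diagonal (in particular `|R| = |C|`). -/
def SubIsTriangle {ρ γ : Type*} (Y : ρ → γ → Prop) (R : Finset ρ) (C : Finset γ) : Prop :=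
  ∃ (k : ℕ) (r : Fin k → ρ) (c : Fin k → γ),
    Function.Injective r ∧ Function.Injective c ∧
    (∀ x : ρ, x ∈ R ↔ ∃ i, r i = x) ∧ (∀ y : γ, y ∈ C ↔ ∃ i, c i = y) ∧
    (∀ i, Y (r i) (c i)) ∧ ∀ i j : Fin k, i < j → ¬ Y (r i) (c j)

/-- `(R, C)` is a persistent triangle of `G`. -/
def PersistentTriangle (G : SimpleGraph V) (R C : Finset V) : Prop :=
  ∀ A : V → V → Prop, InSznz G A → SubIsTriangle A R C

/-- `F` is a direct zero forcing set for `G` from which `R` can be the set of vertices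
that force. -/
def DirectForcesWith (G : SimpleGraph V) (F R : Set V) : Prop :=
  ∃ seq : List (V × V), ValidSeq (StdForce G) seq F ∧ filledAfter F seq = Set.univ ∧
    sourcesOf seq = R ∧ R ⊆ F

/-- `(range r, range c)` is a partition of `G` according to the `m × n` pattern `Y`,
with labelings given by `r` and `c`. -/
def PartitionAccording (G : SimpleGraph V) {m n : ℕ} (Y : Fin m → Fin n → Prop)
    (r : Fin m → V) (c : Fin n → V) : Prop :=
  Function.Injective r ∧ Function.Injective c ∧ (∀ i j, r i ≠ c j) ∧
    (∀ v : V, (∃ i, r i = v) ∨ (∃ j, c j = v)) ∧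
    ∀ i j, G.Adj (r i) (c j) ↔ Y i j

/-- `F` is a zero forcing set for `G` that forces from `V1` to `V2`. -/
def ForcesFromTo (G : SimpleGraph V) (F V1 V2 : Set V) : Prop :=
  V1 ⊆ F ∧ ∃ seq : List (V × V), ValidSeq (StdForce G) seq F ∧
    filledAfter F seq = Set.univ ∧ sourcesOf seq ⊆ V1 ∧ targetsOf seq ⊆ V2

/-- `(V1, V2)` is a partition of the vertex set of `G` into two cliques. -/
def IsCliquePartition (G : SimpleGraph V) (V1 V2 : Set V) : Prop :=
  Disjoint V1 V2 ∧ V1 ∪ V2 = Set.univ ∧ G.IsClique V1 ∧ G.IsClique V2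

/-- `G` is cobipartite. -/
def Cobipartite (G : SimpleGraph V) : Prop := ∃ V1 V2 : Set V, IsCliquePartition G V1 V2

/-- `G` is the cobipartite graph associated with the pattern `Y`, via labelings `r`, `c`. -/
def CobipAssociated (G : SimpleGraph V) {m n : ℕ} (Y : Fin m → Fin n → Prop)
    (r : Fin m → V) (c : Fin n → V) : Prop :=
  PartitionAccording G Y r c ∧ G.IsClique (Set.range r) ∧ G.IsClique (Set.range c)

/-- `z` is a critical vertex: some optimal forcing sequence neither lets `z` force
nor forces `z`. -/
def Critical (G : SimpleGraph V) (z : V) : Prop :=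
  ∃ (F : Set V) (seq : List (V × V)), F.ncard = Z G ∧ ValidSeq (StdForce G) seq F ∧
    filledAfter F seq = Set.univ ∧ z ∉ sourcesOf seq ∧ z ∉ targetsOf seq

/-- `z` is an uncritical vertex: in every optimal forcing sequence, exactly one of the
following holds: `z` performs a force, or `z` gets forced. -/
def Uncritical (G : SimpleGraph V) (z : V) : Prop :=
  ∀ (F : Set V) (seq : List (V × V)), F.ncard = Z G → ValidSeq (StdForce G) seq F →
    filledAfter F seq = Set.univ → (z ∈ sourcesOf seq ↔ z ∉ targetsOf seq)

/-- The maximum nullity `M(G)` over the field `𝔽`. -/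
noncomputable def Mnum (𝔽 : Type*) [Field 𝔽] [Fintype V] [DecidableEq V]
    (G : SimpleGraph V) : ℕ :=
  sSup {k | ∃ A : Matrix V V 𝔽, A.IsSymm ∧ (∀ i j : V, i ≠ j → (A i j ≠ 0 ↔ G.Adj i j)) ∧
    k = Fintype.card V - A.rank}

/-- The minimum rank `mr_𝔽(Y)` of a zero-nonzero pattern over the field `𝔽`. -/
noncomputable def mr (𝔽 : Type*) [Field 𝔽] {m n : ℕ} (Y : Fin m → Fin n → Prop) : ℕ :=
  sInf {k | ∃ A : Matrix (Fin m) (Fin n) 𝔽, (∀ i j, A i j ≠ 0 ↔ Y i j) ∧ A.rank = k}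

/-- `G` is a `k`-tree: there is a construction ordering of the vertices in which the
first `k+1` vertices form a clique and every later vertex is adjacent among the earlier
vertices to exactly a `k`-clique. -/
def IsKTree (k : ℕ) [Fintype V] (G : SimpleGraph V) : Prop :=
  k + 1 ≤ Fintype.card V ∧ ∃ ord : V ≃ Fin (Fintype.card V),
    (∀ u v : V, (ord u : ℕ) < k + 1 → (ord v : ℕ) < k + 1 → u ≠ v → G.Adj u v) ∧
    ∀ v : V, k + 1 ≤ (ord v : ℕ) →
      G.IsClique {u : V | (ord u : ℕ) < (ord v : ℕ) ∧ G.Adj u v} ∧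
      {u : V | (ord u : ℕ) < (ord v : ℕ) ∧ G.Adj u v}.ncard = k

/-!
After a standard force `v → u` with `v` in one clique `W` of a partition into two cliques,
every vertex of `W` other than `u` is already filled, since all of them are neighbours of `v`.
So from then on the unfilled vertices lie in the other clique. When the unfilled vertices
form a clique, the subgraph they induce is connected, and a positive semidefinite force is
a standard one.
-/

lemma targetsOf_cons (p : V × V) (l : List (V × V)) :
    targetsOf (p :: l) = insert p.2 (targetsOf l) := by
  ext x
  simp [targetsOf, eq_comm]

lemma targetsOf_append (l₁ l₂ : List (V × V)) :
    targetsOf (l₁ ++ l₂) = targetsOf l₁ ∪ targetsOf l₂ := by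
  ext x
  simp [targetsOf, or_and_right, exists_or]

lemma filledAfter_nil (F : Set V) : filledAfter F [] = F := by
  simp [filledAfter, targetsOf]

lemma filledAfter_cons (F : Set V) (v u : V) (l : List (V × V)) :
    filledAfter F ((v, u) :: l) = filledAfter (insert u F) l := by
  rw [filledAfter, filledAfter, targetsOf_cons, Set.union_insert, Set.insert_union]

lemma filledAfter_take_succ (F : Set V) (seq : List (V × V)) (i : Fin seq.length) :
    filledAfter F (seq.take (i + 1)) = insert (seq.get i).2 (filledAfter F (seq.take i)) := by
  rw [← List.take_concat_get i.isLt, List.concat_eq_append, filledAfter, filledAfter,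
    targetsOf_append, List.get_eq_getElem]
  simp [targetsOf, Set.union_insert]

lemma filledAfter_take_mono (F : Set V) (seq : List (V × V)) {i j : ℕ} (h : i ≤ j) :
    filledAfter F (seq.take i) ⊆ filledAfter F (seq.take j) := by
  rintro x (hx | ⟨p, hp, rfl⟩)
  · exact Or.inl hx
  · exact Or.inr ⟨p, (List.take_prefix_take_left h).subset hp, rfl⟩

lemma ValidSeq.rule_get {rule : Set V → V → V → Prop} :
    ∀ {seq : List (V × V)} {F : Set V}, ValidSeq rule seq F → ∀ j : Fin seq.length,
      rule (filledAfter F (seq.take j)) (seq.get j).1 (seq.get j).2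
  | (_, _) :: _, F, ⟨hrule, _, hrest⟩, j => by
    cases j using Fin.cases with
    | zero => simpa [filledAfter_nil] using hrule
    | succ j => simpa [filledAfter_cons] using hrest.rule_get j

lemma PsdForce.stdForce_of_isClique_compl {G : SimpleGraph V} {S : Set V} {v u : V}
    (h : PsdForce G S v u) (hS : G.IsClique Sᶜ) : StdForce G S v u := by
  obtain ⟨hv, hu, hadj, honly⟩ := h
  refine ⟨hv, hu, hadj, fun w hvw hw => ?_⟩
  by_contra hwu
  exact hwu (honly w hvw hw (.single ⟨hS hu hw (Ne.symm hwu), hu, hw⟩))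

lemma StdForce.subset_insert_of_isClique {G : SimpleGraph V} {S W : Set V} {v u : V}
    (h : StdForce G S v u) (hW : G.IsClique W) (hvW : v ∈ W) : W ⊆ insert u S := by
  obtain ⟨hv, -, -, honly⟩ := h
  intro w hwW
  by_cases hwS : w ∈ S
  · exact Or.inr hwS
  · have hvw : v ≠ w := fun e => hwS (e ▸ hv)
    exact Or.inl (honly w (hW hvW hwW hvw) hwS)

lemma IsCliquePartition.symm {G : SimpleGraph V} {V₁ V₂ : Set V}
    (h : IsCliquePartition G V₁ V₂) : IsCliquePartition G V₂ V₁ :=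
  ⟨h.1.symm, Set.union_comm V₁ V₂ ▸ h.2.1, h.2.2.2, h.2.2.1⟩

lemma IsCliquePartition.isClique_compl_insert_of_stdForce {G : SimpleGraph V} {V₁ V₂ S : Set V}
    {v u : V} (hP : IsCliquePartition G V₁ V₂) (hv : v ∈ V₁) (h : StdForce G S v u) :
    G.IsClique (insert u S)ᶜ := by
  obtain ⟨-, hcover, hV₁, hV₂⟩ := hP
  refine hV₂.subset fun w hw => ?_
  have hw' : w ∈ V₁ ∪ V₂ := hcover ▸ Set.mem_univ w
  exact hw'.resolve_left fun hw₁ => hw (h.subset_insert_of_isClique hV₁ hv hw₁)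

lemma Cobipartite.isClique_compl_insert_of_stdForce {G : SimpleGraph V} (hG : Cobipartite G)
    {S : Set V} {v u : V} (h : StdForce G S v u) : G.IsClique (insert u S)ᶜ := by
  obtain ⟨V₁, V₂, hP⟩ := hG
  have hv : v ∈ V₁ ∪ V₂ := hP.2.1 ▸ Set.mem_univ v
  rcases hv with hv₁ | hv₂
  · exact hP.isClique_compl_insert_of_stdForce hv₁ h
  · exact hP.symm.isClique_compl_insert_of_stdForce hv₂ h

theorem psd_standard_forces_last_general
    {V : Type*} (G : SimpleGraph V) (hco : Cobipartite G)
    (F : Set V)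
    (seq : List (V × V)) (hval : ValidSeq (PsdForce G) seq F)
    (i j : Fin seq.length) (hij : i < j)
    (hstd : StdForce G (filledAfter F (seq.take (i : ℕ))) (seq.get i).1 (seq.get i).2) :
    StdForce G (filledAfter F (seq.take (j : ℕ))) (seq.get j).1 (seq.get j).2 := by
  have hfilled : insert (seq.get i).2 (filledAfter F (seq.take i)) ⊆
      filledAfter F (seq.take j) :=
    filledAfter_take_succ F seq i ▸ filledAfter_take_mono F seq (Nat.succ_le_of_lt hij)
  have hunfilled : G.IsClique (filledAfter F (seq.take j))ᶜ :=
    (hco.isClique_compl_insert_of_stdForce hstd).subset (Set.compl_subset_compl.2 hfilled)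
  exact (hval.rule_get j).stdForce_of_isClique_compl hunfilled

/-- In a cobipartite graph, in any positive semidefinite forcing
sequence from a positive semidefinite zero forcing set, every force occurring after a
standard force is itself a standard force. -/
theorem psd_standard_forces_last
    {V : Type*} [Fintype V] [DecidableEq V] (G : SimpleGraph V) (hco : Cobipartite G)
    (F : Set V) (hF : IsZFSet (PsdForce G) F)
    (seq : List (V × V)) (hval : ValidSeq (PsdForce G) seq F)
    (i j : Fin seq.length) (hij : i < j)
    (hstd : StdForce G (filledAfter F (seq.take (i : ℕ))) (seq.get i).1 (seq.get i).2) :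
    StdForce G (filledAfter F (seq.take (j : ℕ))) (seq.get j).1 (seq.get j).2 :=
  psd_standard_forces_last_general G hco F seq hval i j hij hstd
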